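/- Fix a set E of exceptions, and let T(X) = D(X + E) be the subdistribution-over-exceptions monad with unit η_X(x) = δ(inl x) and Kleisli extension f†(μ) = μ >>=_D f_*, where f_*(inl x) = f(x) and f_*(inr e) = δ(inr e). Then the composite map Γ_D ∘ Γ_E satisfies the Lax-Unit and Lax-Bind conditions making it a relator for the monad T: (Lax-Unit) if x R y then η_X(x) (Γ_D Γ_E R) η_Y(y); (Lax-Bind) if μ (Γ_D Γ_E R) ν and for all x, y, x R y implies f(x) (Γ_D Γ_E S) g(y), then f†(μ) (Γ_D Γ_E S) g†(ν), for all f : X → D(Z + E), g : Y → D(W + E). -/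

import Mathlib

open scoped ENNReal

/-- The mass that `μ` assigns to a subset `U`. -/
noncomputable def mass {A : Type} (μ : A → ℝ≥0∞) (U : Set A) : ℝ≥0∞ :=
  ∑' a : U, μ a

/-- The relational image `Q(U) = {b | ∃ a ∈ U, a Q b}`. -/
def relImg {A B : Type} (Q : A → B → Prop) (U : Set A) : Set B :=
  {b | ∃ a ∈ U, Q a b}

/-- The probabilistic relator `Γ_D`. -/
def GammaD {A B : Type} (Q : A → B → Prop) (μ : A → ℝ≥0∞) (ν : B → ℝ≥0∞) : Prop :=
  ∀ U : Set A, mass μ U ≤ mass ν (relImg Q U)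

/-- The exception relator `Γ_E`. -/
def GammaE (E : Type) {X Y : Type} (R : X → Y → Prop) :
    (X ⊕ E) → (Y ⊕ E) → Prop :=
  fun u v =>
    (∀ e : E, u = Sum.inr e → v = Sum.inr e) ∧
    (∀ x : X, u = Sum.inl x → ∃ y : Y, v = Sum.inl y ∧ R x y)

open Classical in
/-- The Dirac subdistribution at `a₀`. -/
noncomputable def dirac {A : Type} (a₀ : A) : A → ℝ≥0∞ :=
  fun a => if a = a₀ then 1 else 0

/-- Bind of subdistributions: `(μ >>=_D h)(b) = ∑' a, μ a * h a b`. -/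
noncomputable def bindD {A B : Type} (μ : A → ℝ≥0∞) (h : A → B → ℝ≥0∞) : B → ℝ≥0∞ :=
  fun b => ∑' a, μ a * h a b

/-- The map `f_* : X + E → D(Z + E)`. -/
noncomputable def fstar {X Z E : Type} (f : X → (Z ⊕ E) → ℝ≥0∞) :
    (X ⊕ E) → (Z ⊕ E) → ℝ≥0∞
  | Sum.inl x => f x
  | Sum.inr e => dirac (Sum.inr e)

/-- Kleisli extension for `T X = D(X + E)`: `f† (μ) = μ >>=_D f_*`. -/
noncomputable def dagger {X Z E : Type} (f : X → (Z ⊕ E) → ℝ≥0∞)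
    (μ : (X ⊕ E) → ℝ≥0∞) : (Z ⊕ E) → ℝ≥0∞ :=
  bindD μ (fstar f)

/-!
If `μ (Γ_D Q) ν`, then for test functions with `φ a ≤ ψ b` whenever `a Q b`, the `Q`-image of
the tail `{φ > t}` lies inside `{ψ > t}`, so `μ {φ > t} ≤ ν {ψ > t}` for every `t`; by the
layer-cake formula `∑ μ a φ a = ∫₀^∞ μ {φ > t} dt` this gives `∑ μ φ ≤ ∑ ν ψ`.
Lax-Bind is this inequality for `φ u = f_* u (U)` and `ψ v = g_* v (Γ_E S (U))`, with
`Q = Γ_E R`: the required monotonicity is the hypothesis on `f`, `g` at `inl`, and Lax-Unit for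
`δ (inr e)` at `inr`.
-/

open MeasureTheory

lemma mass_eq_tsum_indicator {A : Type} (μ : A → ℝ≥0∞) (U : Set A) :
    mass μ U = ∑' a, U.indicator μ a :=
  tsum_subtype U μ

lemma mass_mono {A : Type} (μ : A → ℝ≥0∞) {U V : Set A} (h : U ⊆ V) :
    mass μ U ≤ mass μ V := by
  simp only [mass_eq_tsum_indicator]
  exact ENNReal.tsum_le_tsum (Set.indicator_le_indicator_of_subset h fun _ => zero_le)

open Classical in
lemma mass_dirac {A : Type} (a₀ : A) (U : Set A) :
    mass (dirac a₀) U = if a₀ ∈ U then 1 else 0 := by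
  rw [mass_eq_tsum_indicator, tsum_eq_single a₀ fun a ha => by simp [dirac, ha]]
  simp [Set.indicator, dirac]

lemma mass_bindD {A B : Type} (μ : A → ℝ≥0∞) (h : A → B → ℝ≥0∞) (U : Set B) :
    mass (bindD μ h) U = ∑' a, μ a * mass (h a) U := by
  simp only [mass, bindD, ENNReal.tsum_mul_left.symm]
  exact ENNReal.tsum_comm

section Discrete

variable {A : Type} [MeasurableSpace A] [DiscreteMeasurableSpace A]

lemma withDensity_count_apply (μ : A → ℝ≥0∞) (U : Set A) :
    Measure.count.withDensity μ U = mass μ U := by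
  rw [withDensity_apply _ (.of_discrete), ← lintegral_indicator (.of_discrete), lintegral_count,
    mass_eq_tsum_indicator]

lemma lintegral_withDensity_count (μ φ : A → ℝ≥0∞) :
    ∫⁻ a, φ a ∂Measure.count.withDensity μ = ∑' a, μ a * φ a := by
  rw [lintegral_withDensity_eq_lintegral_mul _ .of_discrete .of_discrete, lintegral_count]
  rfl

end Discrete

lemma lintegral_le_lintegral_of_meas_lt_le_of_ne_top {A B : Type} [MeasurableSpace A]
    [MeasurableSpace B] {m : Measure A} {m' : Measure B} {φ : A → ℝ≥0∞} {ψ : B → ℝ≥0∞}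
    (hφ : Measurable φ) (hψ : Measurable ψ) (hφ_top : ∀ a, φ a ≠ ∞) (hψ_top : ∀ b, ψ b ≠ ∞)
    (h : ∀ t, m {a | t < φ a} ≤ m' {b | t < ψ b}) :
    ∫⁻ a, φ a ∂m ≤ ∫⁻ b, ψ b ∂m' := by
  have tail_eq {C : Type} (χ : C → ℝ≥0∞) (hχ : ∀ c, χ c ≠ ∞) {t : ℝ} (ht : 0 ≤ t) :
      {c | t < (χ c).toReal} = {c | ENNReal.ofReal t < χ c} := by
    ext c
    exact (ENNReal.ofReal_lt_iff_lt_toReal ht (hχ c)).symm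
  calc ∫⁻ a, φ a ∂m
      = ∫⁻ a, ENNReal.ofReal (φ a).toReal ∂m :=
        lintegral_congr fun a => (ENNReal.ofReal_toReal (hφ_top a)).symm
    _ = ∫⁻ t in Set.Ioi 0, m {a | t < (φ a).toReal} :=
        lintegral_eq_lintegral_meas_lt m (.of_forall fun _ => ENNReal.toReal_nonneg)
          hφ.ennreal_toReal.aemeasurable
    _ ≤ ∫⁻ t in Set.Ioi 0, m' {b | t < (ψ b).toReal} := by
        refine setLIntegral_mono' measurableSet_Ioi fun t ht => ?_
        rw [tail_eq φ hφ_top (le_of_lt ht), tail_eq ψ hψ_top (le_of_lt ht)]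
        exact h _
    _ = ∫⁻ b, ENNReal.ofReal (ψ b).toReal ∂m' :=
        (lintegral_eq_lintegral_meas_lt m' (.of_forall fun _ => ENNReal.toReal_nonneg)
          hψ.ennreal_toReal.aemeasurable).symm
    _ = ∫⁻ b, ψ b ∂m' := lintegral_congr fun b => ENNReal.ofReal_toReal (hψ_top b)

lemma lintegral_le_lintegral_of_meas_lt_le {A B : Type} [MeasurableSpace A]
    [MeasurableSpace B] {m : Measure A} {m' : Measure B} {φ : A → ℝ≥0∞} {ψ : B → ℝ≥0∞}
    (hφ : Measurable φ) (hψ : Measurable ψ) (h : ∀ t, m {a | t < φ a} ≤ m' {b | t < ψ b}) :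
    ∫⁻ a, φ a ∂m ≤ ∫⁻ b, ψ b ∂m' := by
  have tail_min {C : Type} (χ : C → ℝ≥0∞) (n : ℕ) (t : ℝ≥0∞) :
      {c | t < min (χ c) n} = if t < n then {c | t < χ c} else ∅ := by
    split_ifs with ht <;> ext c <;> simp [ht]
  have min_natCast_ne_top (x : ℝ≥0∞) (n : ℕ) : min x n ≠ ∞ :=
    ((min_le_right x n).trans_lt (ENNReal.natCast_lt_top n)).ne
  have iSup_min (x : ℝ≥0∞) : ⨆ n : ℕ, min x n = x := by
    rw [← inf_iSup_eq, ENNReal.iSup_natCast, inf_top_eq]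
  -- truncating at `n` reduces to finite values, where the real layer-cake formula applies
  calc ∫⁻ a, φ a ∂m
      = ⨆ n : ℕ, ∫⁻ a, min (φ a) n ∂m := by
        simp_rw [← lintegral_iSup (fun n => hφ.min measurable_const)
          fun i j hij a => min_le_min_left _ (Nat.mono_cast hij), iSup_min]
    _ ≤ ⨆ n : ℕ, ∫⁻ b, min (ψ b) n ∂m' := by
        refine iSup_mono fun n => lintegral_le_lintegral_of_meas_lt_le_of_ne_top
          (hφ.min measurable_const) (hψ.min measurable_const)
          (fun a => min_natCast_ne_top (φ a) n) (fun b => min_natCast_ne_top (ψ b) n) fun t => ?_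
        rw [tail_min, tail_min]
        split_ifs
        · exact h t
        · simp
    _ ≤ ∫⁻ b, ψ b ∂m' := iSup_le fun n => lintegral_mono fun b => min_le_left _ _

lemma GammaD.tsum_mul_le {A B : Type} {Q : A → B → Prop} {μ : A → ℝ≥0∞} {ν : B → ℝ≥0∞}
    (h : GammaD Q μ ν) {φ : A → ℝ≥0∞} {ψ : B → ℝ≥0∞} (hQ : ∀ a b, Q a b → φ a ≤ ψ b) :
    ∑' a, μ a * φ a ≤ ∑' b, ν b * ψ b := by
  let : MeasurableSpace A := ⊤
  let : MeasurableSpace B := ⊤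
  rw [← lintegral_withDensity_count, ← lintegral_withDensity_count]
  refine lintegral_le_lintegral_of_meas_lt_le .of_discrete .of_discrete fun t => ?_
  rw [withDensity_count_apply, withDensity_count_apply]
  refine (h _).trans (mass_mono ν ?_)
  rintro b ⟨a, ha, hab⟩
  exact ha.trans_le (hQ a b hab)

lemma gammaD_dirac {A B : Type} {Q : A → B → Prop} {a : A} {b : B} (hab : Q a b) :
    GammaD Q (dirac a) (dirac b) := by
  intro U
  rw [mass_dirac, mass_dirac]
  split_ifs with ha hb
  exacts [le_rfl, absurd ⟨a, ha, hab⟩ hb, zero_le, zero_le]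

lemma gammaE_inl (E : Type) {X Y : Type} {R : X → Y → Prop} {x : X} {y : Y} (h : R x y) :
    GammaE E R (.inl x) (.inl y) :=
  ⟨fun _ he => Sum.inl_ne_inr he |>.elim, fun _ hx => ⟨y, rfl, Sum.inl_injective hx ▸ h⟩⟩

lemma gammaE_inr {E X Y : Type} (R : X → Y → Prop) (e : E) :
    GammaE E R (.inr e) (.inr e) :=
  ⟨fun _ he => congrArg Sum.inr (Sum.inr_injective he), fun _ hx => Sum.inr_ne_inl hx |>.elim⟩

lemma gammaD_fstar {E X Y Z W : Type} {R : X → Y → Prop} {S : Z → W → Prop}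
    {f : X → (Z ⊕ E) → ℝ≥0∞} {g : Y → (W ⊕ E) → ℝ≥0∞}
    (hfg : ∀ x y, R x y → GammaD (GammaE E S) (f x) (g y)) {u : X ⊕ E} {v : Y ⊕ E}
    (huv : GammaE E R u v) : GammaD (GammaE E S) (fstar f u) (fstar g v) := by
  obtain ⟨hinr, hinl⟩ := huv
  cases u with
  | inl x =>
    obtain ⟨y, rfl, hxy⟩ := hinl x rfl
    exact hfg x y hxy
  | inr e =>
    obtain rfl := hinr e rfl
    exact gammaD_dirac (gammaE_inr S e)

/-- The composite map `Γ_D ∘ Γ_E` satisfies the Lax-Unit and Lax-Bind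
conditions for the monad `T X = D(X + E)` with unit `η x = δ(inl x)` and
Kleisli extension `f† μ = μ >>=_D f_*`. -/
theorem gammaD_gammaE_lax_unit_and_bind (E : Type) :
    (∀ (X Y : Type) (R : X → Y → Prop) (x : X) (y : Y), R x y →
      GammaD (GammaE E R) (dirac (Sum.inl x) : (X ⊕ E) → ℝ≥0∞)
        (dirac (Sum.inl y) : (Y ⊕ E) → ℝ≥0∞)) ∧
    (∀ (X Y Z W : Type) (R : X → Y → Prop) (S : Z → W → Prop)
      (μ : (X ⊕ E) → ℝ≥0∞) (hμ : (∑' u, μ u) ≤ 1)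
      (ν : (Y ⊕ E) → ℝ≥0∞) (hν : (∑' v, ν v) ≤ 1)
      (f : X → (Z ⊕ E) → ℝ≥0∞) (hf : ∀ x, (∑' u, f x u) ≤ 1)
      (g : Y → (W ⊕ E) → ℝ≥0∞) (hg : ∀ y, (∑' u, g y u) ≤ 1),
      GammaD (GammaE E R) μ ν →
      (∀ x y, R x y → GammaD (GammaE E S) (f x) (g y)) →
      GammaD (GammaE E S) (dagger f μ) (dagger g ν)) := by
  refine ⟨fun X Y R x y hxy => gammaD_dirac (gammaE_inl E hxy), ?_⟩
  intro X Y Z W R S μ _ ν _ f _ g _ hμν hfg U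
  rw [dagger, dagger, mass_bindD, mass_bindD]
  exact hμν.tsum_mul_le fun u v huv => gammaD_fstar hfg huv U
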